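/- For every even d ≥ 2, the expected Euler characteristic curve per cell of the random permutahedral complex vanishes at p = 1/2; explicitly, Σ_{k=0}^d (-1)^k c_k(d) (1 - 2^{-(d+1-k)}) = 0, where c_k(d) = (number of surjections from Fin(d+1) onto Fin(d+1-k)) / (d+1-k). -/

import Mathlib

/-! Let `s(n, m)` be the number of surjections `Fin n → Fin m` and `F_n(y) = ∑_m s(n, m) y^m` the
Fubini polynomial. Sorting a surjection by the image of `0` and by whether it stays surjective on
the remaining points gives `s(n+1, m) = m (s(n, m) + s(n, m-1))`, that is,
`F_{n+1} = y ((1 + y) F_n' + F_n)`. From it one gets, by induction on `n ≥ 1`, the reflection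
`y F_n(-1 - y) = (-1)^n (1 + y) F_n(y)`: the derivative of the identity for `n` is exactly what the
step needs, and the identity holds after differentiation already for `n = 0`. At the fixed point
`y = -1/2` of `y ↦ -1 - y` this forces `F_n(-1/2) = 0` for even `n ≥ 2`.

With `c_{d-t}(d) = s(d+1, t+1)/(t+1) = s(d, t+1) + s(d, t)`, the Euler characteristic sum splits
into `∑_t (-1)^t (s(d, t+1) + s(d, t))`, which telescopes to `0`, and a multiple of `F_d(-1/2)`. -/

/-- The number of `k`-faces per `d`-cell in the permutahedral tessellation:
`c_k(d) = (number of surjections from Fin(d+1) onto Fin(d+1-k)) / (d+1-k)`. -/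
noncomputable def permFaceCount (d k : ℕ) : ℝ :=
  (Nat.card {f : Fin (d + 1) → Fin (d + 1 - k) // Function.Surjective f} : ℝ) /
    ((d + 1 - k : ℕ) : ℝ)

open Finset Polynomial Function

theorem Set.insert_eq_univ_iff {β : Type*} {c : β} {s : Set β} :
    insert c s = .univ ↔ s = .univ ∨ s = {c}ᶜ := by
  constructor
  · intro h
    by_cases hc : c ∈ s
    · left
      rwa [Set.insert_eq_of_mem hc] at h
    · right
      ext y
      have hy := h ▸ Set.mem_univ y
      rw [Set.mem_insert_iff] at hy
      simp only [Set.mem_compl_singleton_iff]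
      exact ⟨fun hys hyc => hc (hyc ▸ hys), hy.resolve_left⟩
  · rintro (rfl | rfl)
    · exact Set.insert_eq_of_mem (Set.mem_univ c)
    · rw [Set.insert_eq, Set.union_compl_self]

section Surjections

variable {α β γ : Type*}

theorem Nat.card_surjective_fin_succ (n : ℕ) [Fintype β] :
    Nat.card {f : Fin (n + 1) → β // Surjective f} =
      ∑ c : β, Nat.card {g : Fin n → β // insert c (Set.range g) = .univ} := by
  rw [← Nat.card_sigma]
  refine Nat.card_congr (((Fin.consEquiv fun _ => β).subtypeEquiv fun x => ?_).symm.trans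
    (Equiv.subtypeProdEquivSigmaSubtype fun c g => insert c (Set.range g) = .univ))
  rw [← Set.range_eq_univ]
  exact (congrArg (· = Set.univ) (Fin.range_cons x.1 x.2)).to_iff.symm

theorem Nat.card_insert_range_eq_univ [Finite α] [Finite β] (c : β) :
    Nat.card {g : α → β // insert c (Set.range g) = .univ} =
      Nat.card {g : α → β // Surjective g} +
        Nat.card {g : α → β // Set.range g = {c}ᶜ} := by
  classical
  have := Fintype.ofFinite α
  have := Fintype.ofFinite β
  simp only [Set.insert_eq_univ_iff, Set.range_eq_univ, Nat.card_eq_fintype_card]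
  refine Fintype.card_subtype_or_disjoint _ _ fun r hp hq g hrg => ?_
  have hc : c ∈ ({c}ᶜ : Set β) := hq g hrg ▸ (hp g hrg).range_eq ▸ Set.mem_univ c
  exact hc rfl

theorem Nat.card_range_eq_range_of_injective {e : γ → β} (he : Injective e) :
    Nat.card {g : α → β // Set.range g = Set.range e} =
      Nat.card {h : α → γ // Surjective h} := by
  symm
  refine Nat.card_eq_of_bijective
    (fun h => ⟨e ∘ h.1, by rw [Set.range_comp, h.2.range_eq, Set.image_univ]⟩) ⟨?_, ?_⟩
  · intro h₁ h₂ heq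
    exact Subtype.ext (funext fun a => he (congrFun (congrArg Subtype.val heq) a))
  · rintro ⟨g, hg⟩
    choose h hh using fun a => hg ▸ Set.mem_range_self a
    refine ⟨⟨h, fun z => ?_⟩, Subtype.ext (funext hh)⟩
    obtain ⟨a, ha⟩ : e z ∈ Set.range g := hg ▸ Set.mem_range_self z
    exact ⟨a, he ((hh a).trans ha)⟩

end Surjections

noncomputable def surjCount (n m : ℕ) : ℕ := Nat.card {f : Fin n → Fin m // Surjective f}

theorem surjCount_succ_succ (n m : ℕ) :
    surjCount (n + 1) (m + 1) = (m + 1) * (surjCount n (m + 1) + surjCount n m) := by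
  unfold surjCount
  simp_rw [Nat.card_surjective_fin_succ, Nat.card_insert_range_eq_univ, ← Fin.range_succAbove,
    Nat.card_range_eq_range_of_injective Fin.succAbove_right_injective]
  simp

theorem surjCount_eq_zero_of_lt {n m : ℕ} (h : n < m) : surjCount n m = 0 :=
  have : IsEmpty {f : Fin n → Fin m // Surjective f} :=
    ⟨fun f => absurd (Fintype.card_le_of_surjective _ f.2) (by simpa using h)⟩
  Nat.card_of_isEmpty

theorem surjCount_succ_zero (n : ℕ) : surjCount (n + 1) 0 = 0 :=
  have : IsEmpty {f : Fin (n + 1) → Fin 0 // Surjective f} := ⟨fun f => (f.1 0).elim0⟩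
  Nat.card_of_isEmpty

section FubiniPoly

variable (R : Type*)

noncomputable def fubiniPoly [Semiring R] (n : ℕ) : R[X] :=
  ∑ m ∈ range (n + 1), C (surjCount n m : R) * X ^ m

variable {R}

theorem coeff_fubiniPoly [Semiring R] (n m : ℕ) : (fubiniPoly R n).coeff m = surjCount n m := by
  simp only [fubiniPoly, finsetSum_coeff, coeff_C_mul_X_pow, Finset.sum_ite_eq, mem_range]
  split_ifs with h
  · rfl
  · rw [surjCount_eq_zero_of_lt (by omega), Nat.cast_zero]

theorem eval_fubiniPoly [Semiring R] (n : ℕ) (x : R) :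
    (fubiniPoly R n).eval x = ∑ m ∈ range (n + 1), (surjCount n m : R) * x ^ m := by
  simp [fubiniPoly, eval_finsetSum]

theorem fubiniPoly_succ [CommSemiring R] (n : ℕ) :
    fubiniPoly R (n + 1) = X * ((1 + X) * derivative (fubiniPoly R n) + fubiniPoly R n) := by
  ext (_ | _ | m)
  · simp [coeff_fubiniPoly, surjCount_succ_zero]
  · simp [coeff_fubiniPoly, coeff_derivative, surjCount_succ_succ]
  · simp only [coeff_X_mul, coeff_add, add_mul, one_mul, coeff_derivative, coeff_fubiniPoly,
      surjCount_succ_succ]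
    push_cast
    ring

theorem X_mul_fubiniPoly_succ_comp [CommRing R] {n : ℕ}
    (h : derivative (X * (fubiniPoly R n).comp (-1 - X)) =
      (-1) ^ n * derivative ((1 + X) * fubiniPoly R n)) :
    X * (fubiniPoly R (n + 1)).comp (-1 - X) =
      (-1) ^ (n + 1) * ((1 + X) * fubiniPoly R (n + 1)) := by
  simp only [derivative_mul, derivative_comp, derivative_X, derivative_sub, derivative_one,
    derivative_neg, derivative_add] at h
  rw [fubiniPoly_succ]
  simp only [mul_comp, add_comp, X_comp, one_comp]
  linear_combination (-(1 + X) * X) * h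

theorem derivative_X_mul_fubiniPoly_comp [CommRing R] (n : ℕ) :
    derivative (X * (fubiniPoly R n).comp (-1 - X)) =
      (-1) ^ n * derivative ((1 + X) * fubiniPoly R n) := by
  induction n with
  | zero => simp [fubiniPoly]
  | succ n ih =>
    rw [X_mul_fubiniPoly_succ_comp ih, derivative_mul, derivative_mul]
    simp [derivative_pow]

theorem X_mul_fubiniPoly_comp [CommRing R] {n : ℕ} (hn : n ≠ 0) :
    X * (fubiniPoly R n).comp (-1 - X) = (-1) ^ n * ((1 + X) * fubiniPoly R n) := by
  obtain ⟨n, rfl⟩ := Nat.exists_eq_succ_of_ne_zero hn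
  exact X_mul_fubiniPoly_succ_comp (derivative_X_mul_fubiniPoly_comp n)

theorem fubiniPoly_eval_neg_half {K : Type*} [Field K] [NeZero (2 : K)] {n : ℕ} (hn : n ≠ 0)
    (he : Even n) : (fubiniPoly K n).eval (-2⁻¹) = 0 := by
  have h := congrArg (Polynomial.eval (-2⁻¹ : K)) (X_mul_fubiniPoly_comp (R := K) hn)
  have half : (2⁻¹ + 2⁻¹ : K) = 1 := by rw [← two_mul, mul_inv_cancel₀ two_ne_zero]
  have hx : (-1 - -2⁻¹ : K) = -2⁻¹ := by linear_combination half
  simp only [eval_mul, eval_X, eval_comp, eval_sub, eval_neg, eval_one, eval_add, hx,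
    he.neg_one_pow, one_mul] at h
  linear_combination -h

end FubiniPoly

theorem mul_sum_range_shift_add_mul_pow {R : Type*} [CommRing R] (y : R) (b : ℕ → R) (N : ℕ) :
    y * ∑ t ∈ range N, (b (t + 1) + b t) * y ^ t =
      (1 + y) * ∑ t ∈ range N, b t * y ^ t + b N * y ^ N - b 0 := by
  induction N with
  | zero => simp
  | succ N ih =>
    rw [sum_range_succ, sum_range_succ, mul_add, ih]
    ring

theorem permFaceCount_sub {d t : ℕ} (ht : t ≤ d) :
    permFaceCount d (d - t) = surjCount d (t + 1) + surjCount d t := by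
  have hidx : d + 1 - (d - t) = t + 1 := by omega
  change (surjCount (d + 1) (d + 1 - (d - t)) : ℝ) / ((d + 1 - (d - t) : ℕ) : ℝ) = _
  rw [hidx, surjCount_succ_succ]
  push_cast
  field_simp

theorem permFaceCount_summand_sub {d t : ℕ} (hde : Even d) (ht : t ≤ d) :
    (-1 : ℝ) ^ (d - t) * permFaceCount d (d - t) * (1 - ((2 : ℝ) ^ (d + 1 - (d - t)))⁻¹) =
      (surjCount d (t + 1) + surjCount d t) * (-1) ^ t -
        2⁻¹ * ((surjCount d (t + 1) + surjCount d t) * (-2⁻¹) ^ t) := by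
  rw [permFaceCount_sub ht, show d + 1 - (d - t) = t + 1 by omega,
    pow_sub₀ _ (by norm_num) ht, hde.neg_one_pow, one_mul, neg_pow (2⁻¹ : ℝ)]
  simp only [← inv_pow, inv_neg_one]
  ring

/-- For every even `d ≥ 2`, the expected Euler characteristic curve per cell of the
random permutahedral complex vanishes at `p = 1/2`:
`Σ_{k=0}^d (-1)^k c_k(d) (1 - 2^{-(d+1-k)}) = 0`. -/
theorem permutahedral_ec_curve_vanishes_at_half (d : ℕ) (hd : 2 ≤ d) (hde : Even d) :
    ∑ k ∈ Finset.range (d + 1),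
      (-1 : ℝ) ^ k * permFaceCount d k * (1 - ((2 : ℝ) ^ (d + 1 - k))⁻¹) = 0 := by
  set b : ℕ → ℝ := fun m => surjCount d m with hb
  have hb0 : b 0 = 0 := by
    obtain ⟨e, rfl⟩ := Nat.exists_eq_succ_of_ne_zero (by omega : d ≠ 0)
    simp [hb, surjCount_succ_zero]
  have hbd : b (d + 1) = 0 := by simp [hb, surjCount_eq_zero_of_lt (Nat.lt_succ_self d)]
  have hF : ∑ t ∈ range (d + 1), b t * (-2⁻¹) ^ t = 0 :=
    (eval_fubiniPoly d _).symm.trans (fubiniPoly_eval_neg_half (by omega) hde)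
  rw [← sum_range_reflect]
  simp only [Nat.add_sub_cancel]
  rw [sum_congr rfl fun t ht => permFaceCount_summand_sub hde (mem_range_succ_iff.mp ht),
    sum_sub_distrib, ← mul_sum]
  have hsign := mul_sum_range_shift_add_mul_pow (-1 : ℝ) b (d + 1)
  have hhalf := mul_sum_range_shift_add_mul_pow (-2⁻¹ : ℝ) b (d + 1)
  rw [hb0, hbd] at hsign hhalf
  rw [hF] at hhalf
  linear_combination -hsign + hhalf
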